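/- arXiv:2004.01771 — 2 statements merged into one kernel-verified Lean document; each statement's English description precedes it below -/
import Mathlib

section
/- Let a > 0, s > 0 be real and g ∈ ℂ. Then the infimum over all pairs (W, w) ∈ ℂ × (0,∞) of the weighted mean squared error w·(|W|²·(a·|g|² + s) + a·(1 − 2·Re(W·g))) − log(w·a) equals 1 − log(1 + a·|g|²/s), and it is attained exactly at W = a·conj(g)/(a·|g|² + s) and w = 1/a + |g|²/s. -/
/-!
Completing the square in `W` gives `ε(W) = c‖W - Wopt‖² + a s / c` with `c = a‖g‖² + s`, the last
term being the MMSE. Writing `t = w a s / c`, the weighted MSE becomes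
`w c ‖W - Wopt‖² + (t - log t - 1) + (1 - log (c / s))`; both brackets are nonnegative, since
`log t ≤ t - 1` with equality only at `t = 1`, i.e. at `w = c / (a s) = wopt`.
-/

open Complex ComplexConjugate

lemma norm_sq_mul_sub_two_re_mul_eq {c : ℝ} (hc : c ≠ 0) (b W : ℂ) :
    ‖W‖ ^ 2 * c - 2 * (W * b).re = c * ‖W - conj b / c‖ ^ 2 - ‖b‖ ^ 2 / c := by
  simp only [Complex.sq_norm, Complex.normSq_apply, mul_re, sub_re, sub_im, div_ofReal_re,
    div_ofReal_im, conj_re, conj_im]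
  field_simp
  ring

lemma mse_eq_add_norm_sq {a s : ℝ} {g : ℂ} (hc : a * ‖g‖ ^ 2 + s ≠ 0) (W : ℂ) :
    ‖W‖ ^ 2 * (a * ‖g‖ ^ 2 + s) + a * (1 - 2 * (W * g).re) =
      (a * ‖g‖ ^ 2 + s) * ‖W - a * conj g / ((a * ‖g‖ ^ 2 + s : ℝ) : ℂ)‖ ^ 2
        + a * s / (a * ‖g‖ ^ 2 + s) := by
  have h := norm_sq_mul_sub_two_re_mul_eq hc (a * g) W
  rw [map_mul, conj_ofReal, norm_mul, norm_real, Real.norm_eq_abs, mul_pow, sq_abs,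
    mul_left_comm, re_ofReal_mul] at h
  have hconst : a - a ^ 2 * ‖g‖ ^ 2 / (a * ‖g‖ ^ 2 + s) = a * s / (a * ‖g‖ ^ 2 + s) := by
    field_simp; ring
  linear_combination h + hconst

lemma one_le_sub_log {t : ℝ} (ht : 0 < t) : 1 ≤ t - Real.log t := by
  linarith [Real.log_le_sub_one_of_pos ht]

lemma sub_log_eq_one_iff {t : ℝ} (ht : 0 < t) : t - Real.log t = 1 ↔ t = 1 := by
  refine ⟨fun h => ?_, fun h => by simp [h]⟩
  by_contra hne
  linarith [Real.log_lt_sub_one_of_pos ht hne]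

lemma weighted_mse_eq {a s : ℝ} (ha : 0 < a) (hs : 0 < s) (g W : ℂ) {w : ℝ} (hw : 0 < w) :
    w * (‖W‖ ^ 2 * (a * ‖g‖ ^ 2 + s) + a * (1 - 2 * (W * g).re)) - Real.log (w * a) =
      w * (a * ‖g‖ ^ 2 + s) * ‖W - a * conj g / ((a * ‖g‖ ^ 2 + s : ℝ) : ℂ)‖ ^ 2
        + (w * (a * s / (a * ‖g‖ ^ 2 + s)) - Real.log (w * (a * s / (a * ‖g‖ ^ 2 + s))) - 1)
        + (1 - Real.log (1 + a * ‖g‖ ^ 2 / s)) := by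
  have hc : 0 < a * ‖g‖ ^ 2 + s := by positivity
  have hrate : 1 + a * ‖g‖ ^ 2 / s = (a * ‖g‖ ^ 2 + s) / s := by
    field_simp; ring
  have hpos : 0 < a * s / (a * ‖g‖ ^ 2 + s) := by positivity
  rw [mse_eq_add_norm_sq hc.ne', hrate, Real.log_div hc.ne' hs.ne',
    Real.log_mul hw.ne' hpos.ne', Real.log_div (by positivity) hc.ne',
    Real.log_mul ha.ne' hs.ne', Real.log_mul hw.ne' ha.ne']
  ring

/-- Fully minimized weighted MSE: the infimum over `(W, w) ∈ ℂ × (0,∞)` of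
`w·ε(W) − log(w·a)` equals `1 − log(1 + a·|g|²/s)`, attained exactly at
`W = a·conj(g)/(a·|g|²+s)` and `w = 1/a + |g|²/s`. -/
theorem stmt_3 (a s : ℝ) (ha : 0 < a) (hs : 0 < s) (g : ℂ)
    (ξ : ℂ → ℝ → ℝ)
    (hξ : ∀ (W : ℂ) (w : ℝ), ξ W w =
      w * (‖W‖ ^ 2 * (a * ‖g‖ ^ 2 + s) + a * (1 - 2 * (W * g).re))
        - Real.log (w * a))
    (Wopt : ℂ)
    (hWopt : Wopt = (a : ℂ) * (starRingEnd ℂ) g / ((a * ‖g‖ ^ 2 + s : ℝ) : ℂ))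
    (wopt : ℝ) (hwopt : wopt = 1 / a + ‖g‖ ^ 2 / s) :
    (∀ (W : ℂ) (w : ℝ), 0 < w →
        1 - Real.log (1 + a * ‖g‖ ^ 2 / s) ≤ ξ W w) ∧
      (0 < wopt ∧ ξ Wopt wopt = 1 - Real.log (1 + a * ‖g‖ ^ 2 / s)) ∧
      (∀ (W : ℂ) (w : ℝ), 0 < w →
        ξ W w = 1 - Real.log (1 + a * ‖g‖ ^ 2 / s) → W = Wopt ∧ w = wopt) := by
  have hc : 0 < a * ‖g‖ ^ 2 + s := by positivity
  have hweight : ∀ w, w * (a * s / (a * ‖g‖ ^ 2 + s)) = 1 ↔ w = wopt := fun w => by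
    rw [hwopt]; constructor <;> intro h <;> field_simp at h ⊢ <;> linarith
  have hwopt_pos : 0 < wopt := by rw [hwopt]; positivity
  simp only [hξ]
  refine ⟨fun W w hw => ?_, ⟨hwopt_pos, ?_⟩, fun W w hw hmin => ?_⟩
  · rw [weighted_mse_eq ha hs g W hw, ← hWopt]
    have hgap := one_le_sub_log (show 0 < w * (a * s / (a * ‖g‖ ^ 2 + s)) by positivity)
    have hdist := mul_nonneg (mul_pos hw hc).le (sq_nonneg ‖W - Wopt‖)
    linarith
  · rw [weighted_mse_eq ha hs g Wopt hwopt_pos, ← hWopt, (hweight wopt).2 rfl]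
    simp
  · rw [weighted_mse_eq ha hs g W hw, ← hWopt] at hmin
    have ht : 0 < w * (a * s / (a * ‖g‖ ^ 2 + s)) := by positivity
    have hgap := one_le_sub_log ht
    have hdist := mul_nonneg (mul_pos hw hc).le (sq_nonneg ‖W - Wopt‖)
    have hdist_zero : w * (a * ‖g‖ ^ 2 + s) * ‖W - Wopt‖ ^ 2 = 0 := by linarith
    refine ⟨?_, (hweight w).1 ((sub_log_eq_one_iff ht).1 (by linarith))⟩
    simpa [(mul_pos hw hc).ne', sub_eq_zero] using hdist_zero
end

section
/- Let N_R, K ≥ 1, let h ∈ ℂ^{N_R} (a row channel), u_1, …, u_K ∈ ℂ^{N_R}, an index k₀ ∈ {1, …, K}, and real constants C > 0, σ² > 0. For a complex N_R × N_R matrix G define z_k(G) = h ⬝ (G ·ᵥ u_k) ∈ ℂ for each k, σ_u²(G) = C·Σ_{k ≠ k₀} |z_k(G)|² + σ²·‖h ᵥ⬝ G‖² + σ², and R(G) = log(1 + C·|z_{k₀}(G)|²/σ_u²(G)). Then R is real-Fréchet differentiable at every G₀; writing z_k = z_k(G₀), σ² = σ_u²(G₀), and ε_min = (1/C + |z_{k₀}|²/σ²)⁻¹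 = C·σ²/(σ² + C·|z_{k₀}|²), its derivative is the real-linear map V ↦ 2·Re( (ε_min/σ²)·conj(z_{k₀})·(h ⬝ (V ·ᵥ u_{k₀})) − (ε_min·|z_{k₀}|²/σ⁴)·( C·Σ_{k ≠ k₀} conj(z_k)·(h ⬝ (V ·ᵥ u_k)) + σ²·⟪h ᵥ⬝ G₀, h ᵥ⬝ V⟫ ) ); equivalently, the (Wirtinger) matrix gradient of R at G₀ is (ε_min/σ²)·hᴴ·(h ᵥ⬝ G₀)·u_{k₀}·u_{k₀}ᴴ − (ε_min·|z_{k₀}|²/σ⁴)·( C·Σ_{k ≠ k₀} hᴴ·(h ᵥ⬝ G₀)·u_k·u_kᴴ + σ²·hᴴ·(h ᵥ⬝ G₀) ), where each hᴴ·(h ᵥ⬝ G₀)·u_k·u_kᴴ denotes the matrix hᴴ h G₀ u_k u_kᴴ. -/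
noncomputable section

namespace Stmt18

attribute [local instance] Matrix.frobeniusNormedAddCommGroup Matrix.frobeniusNormedSpace

/-- Squared Euclidean norm of a complex vector. -/
def vnormSq {n : ℕ} (v : Fin n → ℂ) : ℝ := ∑ i, ‖v i‖ ^ 2

/-- Euclidean inner product `⟪x, y⟫ = Σᵢ conj(xᵢ)·yᵢ` of complex vectors. -/
def vinner {n : ℕ} (x y : Fin n → ℂ) : ℂ := ∑ i, (starRingEnd ℂ) (x i) * y i

/-- Frobenius inner product of complex matrices. -/
def finner {m n : ℕ} (A B : Matrix (Fin m) (Fin n) ℂ) : ℂ :=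
  ∑ i, ∑ j, (starRingEnd ℂ) (A i j) * B i j

/-! ### Auxiliary lemmas -/

private def ZL {NR : ℕ} (h uk : Fin NR → ℂ) : Matrix (Fin NR) (Fin NR) ℂ →L[ℝ] ℂ :=
  LinearMap.toContinuousLinearMap
  { toFun := fun V => dotProduct h (V.mulVec uk)
    map_add' := fun A B => by
      simp only [Matrix.add_mulVec, dotProduct_add]
    map_smul' := fun r A => by
      simp only [Matrix.smul_mulVec, dotProduct_smul, RingHom.id_apply] }

@[simp] private lemma ZL_apply {NR : ℕ} (h uk : Fin NR → ℂ) (V : Matrix (Fin NR) (Fin NR) ℂ) :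
    ZL h uk V = dotProduct h (V.mulVec uk) := rfl

private lemma hasFDerivAt_absSq (c₀ : ℂ) :
    HasFDerivAt (fun c : ℂ => ‖c‖ ^ 2)
      (((2 * c₀.re) • Complex.reCLM + (2 * c₀.im) • Complex.imCLM) : ℂ →L[ℝ] ℝ) c₀ := by
  have e : (fun c : ℂ => ‖c‖ ^ 2) = fun c : ℂ => c.re * c.re + c.im * c.im := by
    funext c; rw [Complex.sq_norm, Complex.normSq_apply]
  rw [e]
  have h1 := (Complex.reCLM.hasFDerivAt (x := c₀)).mul (Complex.reCLM.hasFDerivAt (x := c₀))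
  have h2 := (Complex.imCLM.hasFDerivAt (x := c₀)).mul (Complex.imCLM.hasFDerivAt (x := c₀))
  refine (h1.add h2).congr_fderiv ?_
  ext V
  simp [Complex.reCLM_apply, Complex.imCLM_apply]
  ring

private lemma vecMul_apply' {NR : ℕ} (h : Fin NR → ℂ) (G : Matrix (Fin NR) (Fin NR) ℂ)
    (i : Fin NR) :
    Matrix.vecMul h G i = dotProduct h (G.mulVec (Pi.single i 1)) := by
  simp [Matrix.vecMul, Matrix.mulVec_single, dotProduct]

private lemma finner_add {m n : ℕ} (A B V : Matrix (Fin m) (Fin n) ℂ) :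
    finner (A + B) V = finner A V + finner B V := by
  simp [finner, Matrix.add_apply, map_add, add_mul, Finset.sum_add_distrib]

private lemma finner_sub {m n : ℕ} (A B V : Matrix (Fin m) (Fin n) ℂ) :
    finner (A - B) V = finner A V - finner B V := by
  simp [finner, Matrix.sub_apply, map_sub, sub_mul, Finset.sum_sub_distrib]

private lemma finner_smul {m n : ℕ} (r : ℝ) (A V : Matrix (Fin m) (Fin n) ℂ) :
    finner (r • A) V = (r : ℂ) * finner A V := by
  simp [finner, Matrix.smul_apply, Complex.real_smul, map_mul, Complex.conj_ofReal,
    Finset.mul_sum, mul_assoc]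

private lemma finner_csmul {m n : ℕ} (z : ℂ) (A V : Matrix (Fin m) (Fin n) ℂ) :
    finner (z • A) V = (starRingEnd ℂ) z * finner A V := by
  simp [finner, Matrix.smul_apply, smul_eq_mul, map_mul, Finset.mul_sum, mul_assoc]

private lemma finner_sum {m n : ℕ} {ι : Type*} (s : Finset ι)
    (A : ι → Matrix (Fin m) (Fin n) ℂ) (V : Matrix (Fin m) (Fin n) ℂ) :
    finner (∑ k ∈ s, A k) V = ∑ k ∈ s, finner (A k) V := by
  classical
  induction s using Finset.induction with
  | empty => simp [finner]
  | insert x s hx ih => rw [Finset.sum_insert hx, finner_add, ih, Finset.sum_insert hx]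

private lemma vmv_mul_vmv {n : ℕ} (a b c d : Fin n → ℂ) :
    Matrix.vecMulVec a b * Matrix.vecMulVec c d
      = dotProduct b c • Matrix.vecMulVec a d := by
  ext i j
  simp only [Matrix.mul_apply, Matrix.vecMulVec_apply, Matrix.smul_apply, smul_eq_mul,
    dotProduct, Finset.sum_mul]
  exact Finset.sum_congr rfl fun l _ => by ring

private lemma finner_vmv {n : ℕ} (a b : Fin n → ℂ) (V : Matrix (Fin n) (Fin n) ℂ) :
    finner (Matrix.vecMulVec (star a) b) V = vinner b (Matrix.vecMul a V) := by
  simp only [finner, vinner, Matrix.vecMulVec_apply, Pi.star_apply, Complex.star_def,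
    map_mul, Complex.conj_conj, Matrix.vecMul, dotProduct, Finset.mul_sum]
  rw [Finset.sum_comm]
  exact Finset.sum_congr rfl fun j _ => Finset.sum_congr rfl fun i _ => by ring

set_option maxHeartbeats 2000000 in
/-- Wirtinger matrix gradient of the multicast rate
`R(G) = log(1 + C·|z_{k₀}(G)|²/σ_u²(G))` with respect to the relay precoder `G`, where
`z_k(G) = h·(G u_k)` and `σ_u²(G) = C·Σ_{k≠k₀}|z_k(G)|² + σ²·‖h G‖² + σ²`. -/
theorem stmt_18 (NR K : ℕ) (hNR : 1 ≤ NR) (hK : 1 ≤ K)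
    (h : Fin NR → ℂ) (u : Fin K → Fin NR → ℂ) (k₀ : Fin K)
    (C σ2 : ℝ) (hC : 0 < C) (hσ2 : 0 < σ2)
    (z : Matrix (Fin NR) (Fin NR) ℂ → Fin K → ℂ)
    (hz : ∀ G k, z G k = dotProduct h (G.mulVec (u k)))
    (σu : Matrix (Fin NR) (Fin NR) ℂ → ℝ)
    (hσu : ∀ G, σu G = C * ∑ k ∈ Finset.univ.erase k₀, ‖z G k‖ ^ 2 +
      σ2 * vnormSq (Matrix.vecMul h G) + σ2)
    (R : Matrix (Fin NR) (Fin NR) ℂ → ℝ)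
    (hR : ∀ G, R G = Real.log (1 + C * ‖z G k₀‖ ^ 2 / σu G))
    (G₀ : Matrix (Fin NR) (Fin NR) ℂ)
    (εmin : ℝ) (hεmin : εmin = (1 / C + ‖z G₀ k₀‖ ^ 2 / σu G₀)⁻¹) :
    ∃ D : Matrix (Fin NR) (Fin NR) ℂ →L[ℝ] ℝ, HasFDerivAt R D G₀ ∧
      (εmin = C * σu G₀ / (σu G₀ + C * ‖z G₀ k₀‖ ^ 2)) ∧
      (∀ V, D V = 2 * ((((εmin / σu G₀ : ℝ) : ℂ) * (starRingEnd ℂ) (z G₀ k₀) *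
            dotProduct h (V.mulVec (u k₀)) -
          ((εmin * ‖z G₀ k₀‖ ^ 2 / σu G₀ ^ 2 : ℝ) : ℂ) *
            ((C : ℂ) * ∑ k ∈ Finset.univ.erase k₀,
                (starRingEnd ℂ) (z G₀ k) * dotProduct h (V.mulVec (u k)) +
              (σ2 : ℂ) * vinner (Matrix.vecMul h G₀) (Matrix.vecMul h V))).re)) ∧
      (∀ V, D V = 2 * (finner
          ((εmin / σu G₀) • (Matrix.vecMulVec (star h) (Matrix.vecMul h G₀) *
              Matrix.vecMulVec (u k₀) (star (u k₀))) -
            (εmin * ‖z G₀ k₀‖ ^ 2 / σu G₀ ^ 2) •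
              (C • ∑ k ∈ Finset.univ.erase k₀,
                  Matrix.vecMulVec (star h) (Matrix.vecMul h G₀) *
                    Matrix.vecMulVec (u k) (star (u k)) +
                σ2 • Matrix.vecMulVec (star h) (Matrix.vecMul h G₀))) V).re) := by
  classical
  -- notation
  set t : ℝ := ‖z G₀ k₀‖ ^ 2 with ht
  set s : ℝ := σu G₀ with hs
  -- component derivatives
  set DZ : Fin K → (Matrix (Fin NR) (Fin NR) ℂ →L[ℝ] ℝ) := fun k =>
    (((2 * (dotProduct h (G₀.mulVec (u k))).re) • Complex.reCLM +
      (2 * (dotProduct h (G₀.mulVec (u k))).im) • Complex.imCLM).comp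
        (ZL h (u k))) with hDZdef
  have hDZ : ∀ k, HasFDerivAt
      (fun G : Matrix (Fin NR) (Fin NR) ℂ => ‖dotProduct h (G.mulVec (u k))‖ ^ 2) (DZ k) G₀ := by
    intro k
    rw [hDZdef]
    exact (hasFDerivAt_absSq _).comp G₀ ((ZL h (u k)).hasFDerivAt (x := G₀))
  set DW : Fin NR → (Matrix (Fin NR) (Fin NR) ℂ →L[ℝ] ℝ) := fun i =>
    (((2 * (dotProduct h (G₀.mulVec (Pi.single i 1))).re) • Complex.reCLM +
      (2 * (dotProduct h (G₀.mulVec (Pi.single i 1))).im) • Complex.imCLM).comp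
        (ZL h (Pi.single i 1))) with hDWdef
  have hDW : ∀ i, HasFDerivAt
      (fun G : Matrix (Fin NR) (Fin NR) ℂ => ‖dotProduct h (G.mulVec (Pi.single i 1))‖ ^ 2)
      (DW i) G₀ := by
    intro i
    rw [hDWdef]
    exact (hasFDerivAt_absSq _).comp G₀ ((ZL h (Pi.single i 1)).hasFDerivAt (x := G₀))
  -- explicit forms of the functions
  set gf : Matrix (Fin NR) (Fin NR) ℂ → ℝ := fun G =>
    C * ∑ k ∈ Finset.univ.erase k₀,
        ‖dotProduct h (G.mulVec (u k))‖ ^ 2 +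
      σ2 * ∑ i, ‖dotProduct h (G.mulVec (Pi.single i 1))‖ ^ 2 + σ2
    with hgf
  set ff : Matrix (Fin NR) (Fin NR) ℂ → ℝ := fun G =>
    C * ‖dotProduct h (G.mulVec (u k₀))‖ ^ 2 with hff
  have hσu_eq : ∀ G, σu G = gf G := by
    intro G
    rw [hσu, hgf]
    simp only [vnormSq]
    congr 1
    · congr 1
      · congr 1
        exact Finset.sum_congr rfl fun k _ => by rw [hz]
      · congr 1
        exact Finset.sum_congr rfl fun i _ => by rw [vecMul_apply']
  have hff_eq : ∀ G, C * ‖z G k₀‖ ^ 2 = ff G := by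
    intro G; rw [hz, hff]
  -- positivity
  have hgf_pos : ∀ G, 0 < gf G := by
    intro G
    have h1 : (0:ℝ) ≤ ∑ k ∈ Finset.univ.erase k₀,
        ‖dotProduct h (G.mulVec (u k))‖ ^ 2 :=
      Finset.sum_nonneg fun k _ => by positivity
    have h2 : (0:ℝ) ≤ ∑ i, ‖dotProduct h (G.mulVec (Pi.single i 1))‖ ^ 2 :=
      Finset.sum_nonneg fun i _ => by positivity
    have := mul_nonneg hC.le h1
    have := mul_nonneg hσ2.le h2
    simp only [hgf]
    nlinarith
  have hff_nonneg : ∀ G, 0 ≤ ff G := fun G => by simp only [hff]; positivity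
  have hs_pos : 0 < s := by rw [hs, hσu_eq]; exact hgf_pos G₀
  have hst_pos : 0 < s + C * t := by
    have : 0 ≤ C * t := mul_nonneg hC.le (by positivity)
    linarith
  -- rewrite R
  have hR_eq : R = fun G => Real.log (gf G + ff G) - Real.log (gf G) := by
    funext G
    have h0 : gf G ≠ 0 := (hgf_pos G).ne'
    have hpos : 0 < gf G + ff G := by
      have := hgf_pos G; have := hff_nonneg G; linarith
    rw [hR, hff_eq, hσu_eq]
    have h1 : 1 + ff G / gf G = (gf G + ff G) / gf G := by
      field_simp
    rw [h1, Real.log_div hpos.ne' h0]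
  -- derivatives of gf and ff
  set Dg : Matrix (Fin NR) (Fin NR) ℂ →L[ℝ] ℝ := C • (∑ k ∈ Finset.univ.erase k₀, DZ k) + σ2 • (∑ i, DW i)
    with hDgdef
  have hg : HasFDerivAt gf Dg G₀ := by
    have h1 : HasFDerivAt (fun G : Matrix (Fin NR) (Fin NR) ℂ => ∑ k ∈ Finset.univ.erase k₀,
        ‖dotProduct h (G.mulVec (u k))‖ ^ 2)
        (∑ k ∈ Finset.univ.erase k₀, DZ k) G₀ :=
      HasFDerivAt.fun_sum fun k _ => hDZ k
    have h2 : HasFDerivAt (fun G : Matrix (Fin NR) (Fin NR) ℂ => ∑ i,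
        ‖dotProduct h (G.mulVec (Pi.single i 1))‖ ^ 2)
        (∑ i, DW i) G₀ :=
      HasFDerivAt.fun_sum fun i _ => hDW i
    have := ((h1.const_mul C).add (h2.const_mul σ2)).add_const σ2
    rw [hgf, hDgdef]; exact this
  set Df : Matrix (Fin NR) (Fin NR) ℂ →L[ℝ] ℝ := C • DZ k₀ with hDfdef
  have hf : HasFDerivAt ff Df G₀ := by
    have := (hDZ k₀).const_mul C
    rw [hff, hDfdef]; exact this
  -- derivative of R
  set D : Matrix (Fin NR) (Fin NR) ℂ →L[ℝ] ℝ := (gf G₀ + ff G₀)⁻¹ • (Dg + Df) - (gf G₀)⁻¹ • Dg with hDdef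
  have hgf0 : gf G₀ = s := (hσu_eq G₀).symm
  have hff0 : ff G₀ = C * t := (hff_eq G₀).symm
  have hDR : HasFDerivAt R D G₀ := by
    rw [hR_eq]
    have h1 : HasFDerivAt (fun G => Real.log (gf G + ff G))
        ((gf G₀ + ff G₀)⁻¹ • (Dg + Df)) G₀ := by
      have hne : gf G₀ + ff G₀ ≠ 0 := by
        have h1 := hgf_pos G₀; have h2 := hff_nonneg G₀; linarith
      exact (hg.add hf).log hne
    have h2 : HasFDerivAt (fun G => Real.log (gf G)) ((gf G₀)⁻¹ • Dg) G₀ :=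
      hg.log (hgf_pos G₀).ne'
    exact h1.sub h2
  -- epsilon identity
  have hε : εmin = C * s / (s + C * t) := by
    rw [hεmin]
    have h1 : 1 / C + t / s = (s + C * t) / (C * s) := by
      field_simp
    rw [h1, inv_div]
  -- real atoms
  have hz0 : z G₀ k₀ = dotProduct h (G₀.mulVec (u k₀)) := hz G₀ k₀
  -- key formula (first form)
  have key : ∀ V, D V = 2 * ((((εmin / s : ℝ) : ℂ) * (starRingEnd ℂ) (z G₀ k₀) *
        dotProduct h (V.mulVec (u k₀)) -
      ((εmin * t / s ^ 2 : ℝ) : ℂ) *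
        ((C : ℂ) * ∑ k ∈ Finset.univ.erase k₀,
            (starRingEnd ℂ) (z G₀ k) * dotProduct h (V.mulVec (u k)) +
          (σ2 : ℂ) * vinner (Matrix.vecMul h G₀) (Matrix.vecMul h V))).re) := by
    intro V
    set A : ℝ := ((starRingEnd ℂ) (z G₀ k₀) * dotProduct h (V.mulVec (u k₀))).re with hA
    set S1 : ℝ := ∑ k ∈ Finset.univ.erase k₀,
      ((starRingEnd ℂ) (z G₀ k) * dotProduct h (V.mulVec (u k))).re with hS1
    set S2 : ℝ := (vinner (Matrix.vecMul h G₀) (Matrix.vecMul h V)).re with hS2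
    -- evaluate the linear map
    have eDZ : ∀ k, DZ k V = 2 * ((starRingEnd ℂ) (z G₀ k) *
        dotProduct h (V.mulVec (u k))).re := by
      intro k
      simp only [hDZdef, ContinuousLinearMap.comp_apply, ContinuousLinearMap.add_apply,
        ContinuousLinearMap.coe_smul', Pi.smul_apply, Complex.reCLM_apply, Complex.imCLM_apply,
        smul_eq_mul, ZL_apply, Complex.mul_re, Complex.conj_re, Complex.conj_im, hz]
      ring
    have eDW : ∀ i, DW i V = 2 * ((starRingEnd ℂ) (Matrix.vecMul h G₀ i) *
        (Matrix.vecMul h V i)).re := by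
      intro i
      simp only [hDWdef, ContinuousLinearMap.comp_apply, ContinuousLinearMap.add_apply,
        ContinuousLinearMap.coe_smul', Pi.smul_apply, Complex.reCLM_apply, Complex.imCLM_apply,
        smul_eq_mul, ZL_apply, Complex.mul_re, Complex.conj_re, Complex.conj_im, vecMul_apply']
      ring
    have e1 : (∑ k ∈ Finset.univ.erase k₀, DZ k) V = 2 * S1 := by
      rw [ContinuousLinearMap.sum_apply, hS1, Finset.mul_sum]
      exact Finset.sum_congr rfl fun k _ => eDZ k
    have e2 : (∑ i, DW i) V = 2 * S2 := by
      rw [ContinuousLinearMap.sum_apply, hS2]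
      simp only [vinner]
      rw [Complex.re_sum, Finset.mul_sum]
      exact Finset.sum_congr rfl fun i _ => eDW i
    have eDg : Dg V = C * (2 * S1) + σ2 * (2 * S2) := by
      simp only [hDgdef, ContinuousLinearMap.add_apply, ContinuousLinearMap.coe_smul',
        Pi.smul_apply, smul_eq_mul, e1, e2]
    have eDf : Df V = C * (2 * A) := by
      simp only [hDfdef, ContinuousLinearMap.coe_smul', Pi.smul_apply, smul_eq_mul]
      rw [eDZ k₀, hA]
    have eD : D V = (s + C * t)⁻¹ * ((C * (2 * S1) + σ2 * (2 * S2)) + C * (2 * A)) -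
        s⁻¹ * (C * (2 * S1) + σ2 * (2 * S2)) := by
      simp only [hDdef, ContinuousLinearMap.sub_apply, ContinuousLinearMap.coe_smul',
        Pi.smul_apply, ContinuousLinearMap.add_apply, smul_eq_mul, hgf0, hff0, eDg, eDf]
    -- evaluate the real part on the right-hand side
    have eRHS : ((((εmin / s : ℝ) : ℂ) * (starRingEnd ℂ) (z G₀ k₀) *
        dotProduct h (V.mulVec (u k₀)) -
      ((εmin * t / s ^ 2 : ℝ) : ℂ) *
        ((C : ℂ) * ∑ k ∈ Finset.univ.erase k₀,
            (starRingEnd ℂ) (z G₀ k) * dotProduct h (V.mulVec (u k)) +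
          (σ2 : ℂ) * vinner (Matrix.vecMul h G₀) (Matrix.vecMul h V))).re)
        = (εmin / s) * A - (εmin * t / s ^ 2) * (C * S1 + σ2 * S2) := by
      rw [Complex.sub_re, mul_assoc, Complex.re_ofReal_mul, Complex.re_ofReal_mul,
        Complex.add_re]
      have e1 : ((C : ℂ) * ∑ k ∈ Finset.univ.erase k₀,
          (starRingEnd ℂ) (z G₀ k) * dotProduct h (V.mulVec (u k))).re = C * S1 := by
        rw [show ((C:ℝ):ℂ) = (C:ℂ) from rfl, Complex.re_ofReal_mul, Complex.re_sum, hS1]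
      have e2 : ((σ2 : ℂ) * vinner (Matrix.vecMul h G₀) (Matrix.vecMul h V)).re
          = σ2 * S2 := by
        rw [Complex.re_ofReal_mul, hS2]
      rw [e1, e2, hA]
    rw [eD, eRHS, hε]
    have h1 : s ≠ 0 := hs_pos.ne'
    have h2 : s + C * t ≠ 0 := hst_pos.ne'
    field_simp
    ring
  refine ⟨D, hDR, hε, key, ?_⟩
  -- second (matrix-gradient) form
  intro V
  rw [key V]
  congr 2
  -- complex identity between the two expressions
  have hproj : ∀ (v : Fin NR → ℂ),
      vinner (star v) (Matrix.vecMul h V) = dotProduct h (V.mulVec v) := by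
    intro v
    rw [Matrix.dotProduct_mulVec]
    simp only [vinner, Pi.star_apply, Complex.star_def, Complex.conj_conj, dotProduct]
    exact Finset.sum_congr rfl fun j _ => mul_comm _ _
  have hzd : ∀ k, dotProduct (Matrix.vecMul h G₀) (u k) = z G₀ k := by
    intro k
    rw [hz, Matrix.dotProduct_mulVec]
  rw [finner_sub, finner_smul, finner_smul, finner_add, finner_smul, finner_smul, finner_sum]
  simp only [vmv_mul_vmv, finner_csmul, finner_vmv, hproj, hzd]
  push_cast
  ring

end Stmt18
end
end
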